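/- arXiv:1412.1972 — 9 statements merged into one kernel-verified Lean document; each statement's English description precedes it below -/
import Mathlib

section
/- Let p be a probability distribution on ℕ with p_0 > 0 and μ_p ≤ 1. If a sequence H : ℕ → [0,1] satisfies H(n) = Σ_{m≤n} p_m H(n)^m for all n, then H is non-decreasing. -/
open Finset

/-!
If `H (n + 1) < H n`, put `f t = ∑_{m ≤ n+1} p m t ^ m`, `x = H (n + 1)` and `y = H n`. The
fixed-point equations give `f x = x` and `f y ≥ y`, so `f y - f x ≥ y - x`. But on `[0, 1]` the
slope of `f` is at most `∑ m p m ≤ 1`, and strictly less: either some `p m` with `m ≥ 2` is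
positive, and `t ^ m` has slope `< m` on `[x, y]` since `x < 1`; or `f` is affine with slope
`p 1 ≤ 1 - p 0 < 1`.
-/

section PowSubPow

variable {R : Type*} [CommRing R] [LinearOrder R] [IsStrictOrderedRing R] {x y : R}

theorem pow_sub_pow_le_natCast_mul_sub (hx : 0 ≤ x) (hxy : x ≤ y) (hy : y ≤ 1) (m : ℕ) :
    y ^ m - x ^ m ≤ m * (y - x) :=
  calc y ^ m - x ^ m ≤ |y ^ m - x ^ m| := le_abs_self _
    _ ≤ |y - x| * m * max |y| |x| ^ (m - 1) := abs_pow_sub_pow_le ..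
    _ ≤ (y - x) * m * 1 := by
      rw [abs_of_nonneg (sub_nonneg.2 hxy), abs_of_nonneg (hx.trans hxy), abs_of_nonneg hx,
        max_eq_left hxy]
      gcongr
      exact pow_le_one₀ (hx.trans hxy) hy
    _ = m * (y - x) := by ring

theorem pow_sub_pow_lt_natCast_mul_sub (hx : 0 ≤ x) (hxy : x < y) (hy : y ≤ 1) {m : ℕ}
    (hm : 2 ≤ m) : y ^ m - x ^ m < m * (y - x) := by
  have hy0 : 0 ≤ y := hx.trans hxy.le
  rw [← geom_sum₂_mul]
  refine mul_lt_mul_of_pos_right ?_ (sub_pos.2 hxy)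
  calc ∑ i ∈ range m, y ^ i * x ^ (m - 1 - i) < ∑ i ∈ range m, (1 : R) := by
        refine sum_lt_sum (fun i _ => ?_) ⟨0, mem_range.2 (by omega), ?_⟩
        · exact mul_le_one₀ (pow_le_one₀ hy0 hy) (pow_nonneg hx _)
            (pow_le_one₀ hx (hxy.le.trans hy))
        · simpa using pow_lt_one₀ hx (hxy.trans_le hy) (by omega)
    _ = m := by simp

end PowSubPow

theorem sum_mul_pow_sub_pow_lt_sub {p : ℕ → ℝ} {N : ℕ} (hp : ∀ k, 0 ≤ p k) (hp0 : 0 < p 0)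
    (hmass : ∑ k ∈ range (N + 1), p k ≤ 1) (hmean : ∑ k ∈ range (N + 1), (k : ℝ) * p k ≤ 1)
    {x y : ℝ} (hx : 0 ≤ x) (hxy : x < y) (hy : y ≤ 1) :
    ∑ m ∈ range (N + 1), p m * (y ^ m - x ^ m) < y - x := by
  have hyx : 0 < y - x := sub_pos.2 hxy
  have hle (m : ℕ) : p m * (y ^ m - x ^ m) ≤ p m * (m * (y - x)) :=
    mul_le_mul_of_nonneg_left (pow_sub_pow_le_natCast_mul_sub hx hxy.le hy m) (hp m)
  by_cases hhigh : ∃ m ∈ range (N + 1), 2 ≤ m ∧ 0 < p m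
  · obtain ⟨m₀, hm₀, hm₀2, hpm₀⟩ := hhigh
    calc ∑ m ∈ range (N + 1), p m * (y ^ m - x ^ m)
        < ∑ m ∈ range (N + 1), p m * (m * (y - x)) :=
          sum_lt_sum (fun m _ => hle m) ⟨m₀, hm₀,
            mul_lt_mul_of_pos_left (pow_sub_pow_lt_natCast_mul_sub hx hxy hy hm₀2) hpm₀⟩
      _ = (∑ m ∈ range (N + 1), (m : ℝ) * p m) * (y - x) := by
          rw [sum_mul]; exact sum_congr rfl fun m _ => by ring
      _ ≤ y - x := mul_le_of_le_one_left hyx.le hmean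
  · push Not at hhigh
    have hterm (m : ℕ) (hm : m ∈ range (N + 1)) : p m * (y ^ m - x ^ m) ≤ p m * (y - x) := by
      by_cases hm2 : 2 ≤ m
      · simp [le_antisymm (hhigh m hm hm2) (hp m)]
      · refine (hle m).trans (mul_le_mul_of_nonneg_left ?_ (hp m))
        exact mul_le_of_le_one_left hyx.le (by exact_mod_cast (show m ≤ 1 by omega))
    calc ∑ m ∈ range (N + 1), p m * (y ^ m - x ^ m)
        < ∑ m ∈ range (N + 1), p m * (y - x) :=
          sum_lt_sum hterm ⟨0, by simp, by simpa using mul_pos hp0 hyx⟩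
      _ = (∑ m ∈ range (N + 1), p m) * (y - x) := (sum_mul ..).symm
      _ ≤ y - x := mul_le_of_le_one_left hyx.le hmass

/-- If `p` is a pmf on ℕ with `p 0 > 0` and mean `≤ 1`, and `H : ℕ → [0,1]`
satisfies the fixed-point equation `H n = Σ_{m≤n} p m · (H n)^m` for all `n`,
then `H` is non-decreasing. -/
theorem H_monotone (p : ℕ → ℝ) (hp : ∀ k, 0 ≤ p k) (hsum : ∑' k, p k = 1)
    (hp0 : 0 < p 0) (hmeanS : Summable fun k : ℕ => (k : ℝ) * p k)
    (hmean : ∑' k : ℕ, (k : ℝ) * p k ≤ 1)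
    (H : ℕ → ℝ) (hH : ∀ n, H n ∈ Set.Icc (0 : ℝ) 1)
    (hfix : ∀ n, H n = ∑ m ∈ Finset.range (n + 1), p m * H n ^ m) :
    Monotone H := by
  refine monotone_nat_of_le_succ fun n => ?_
  by_contra! hlt
  have hpS : Summable p := by
    by_contra h
    simp [tsum_eq_zero_of_not_summable h] at hsum
  have hmass : ∑ k ∈ range (n + 2), p k ≤ 1 :=
    hsum ▸ hpS.sum_le_tsum _ fun k _ => hp k
  have hmean' : ∑ k ∈ range (n + 2), (k : ℝ) * p k ≤ 1 :=
    (hmeanS.sum_le_tsum _ fun k _ => mul_nonneg k.cast_nonneg (hp k)).trans hmean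
  have hgain : ∑ m ∈ range (n + 2), p m * (H n ^ m - H (n + 1) ^ m)
      = H n - H (n + 1) + p (n + 1) * H n ^ (n + 1) := by
    simp only [mul_sub, sum_sub_distrib]
    rw [← hfix (n + 1), sum_range_succ, ← hfix n]
    ring
  have hcontr := sum_mul_pow_sub_pow_lt_sub hp hp0 hmass hmean' (hH (n + 1)).1 hlt (hH n).2
  rw [hgain] at hcontr
  have := mul_nonneg (hp (n + 1)) (pow_nonneg ((hH n).1) (n + 1))
  linarith
end

section
/- Let p be a pmf on ℕ and let H : ℕ → [0,1] satisfy H(n) = Σ_{m≤n} p_m H(n)^m for all n. Set q_n = H(n) − H(n−1) for n ≥ 1. Then for all n ≥ 1: q_n · (1 − Σ_{1≤m≤n−1} p_m Σ_{1≤i≤m} H(n)^{m−i} H(n−1)^{i−1}) = p_n · H(n)^n. -/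
open Finset

/-!
Subtract the fixed-point equations at `n` and `n - 1`: the terms `m < n` pair up as
`p m (H(n)^m - H(n-1)^m)`, each of which factors as `(H n - H (n-1))` times the inner sum, while
`p n H(n)^n` is left over. Collecting the multiples of `q n = H n - H (n-1)` gives the recursion.
-/

section
variable {R : Type*} [CommRing R]

theorem sum_Icc_pow_mul_pow_eq_geom_sum₂ (a b : R) (m : ℕ) :
    ∑ i ∈ Icc 1 m, a ^ (m - i) * b ^ (i - 1) = ∑ j ∈ range m, b ^ j * a ^ (m - 1 - j) := by
  rw [← Ico_add_one_right_eq_Icc, sum_Ico_eq_sum_range, Nat.add_sub_cancel]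
  refine sum_congr rfl fun j _ => ?_
  rw [Nat.add_sub_cancel_left, mul_comm, Nat.sub_add_eq]

theorem sub_mul_sum_Icc_pow_mul_pow (a b : R) (m : ℕ) :
    (a - b) * ∑ i ∈ Icc 1 m, a ^ (m - i) * b ^ (i - 1) = a ^ m - b ^ m := by
  rw [sum_Icc_pow_mul_pow_eq_geom_sum₂, ← geom_sum₂_comm, mul_comm, geom_sum₂_mul]

theorem sum_range_mul_pow_sub_sum_range_mul_pow (c : ℕ → R) (a b : R) (n : ℕ) :
    ∑ m ∈ range n, c m * a ^ m - ∑ m ∈ range n, c m * b ^ m =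
      (a - b) * ∑ m ∈ Icc 1 (n - 1), c m * ∑ i ∈ Icc 1 m, a ^ (m - i) * b ^ (i - 1) := by
  have hsub : Icc 1 (n - 1) ⊆ range n := fun m hm => by
    simp only [mem_Icc, mem_range] at hm ⊢; omega
  -- the only index of `range n` outside `Icc 1 (n - 1)` is `0`, where the inner sum is empty
  have hzero : ∀ m ∈ range n, m ∉ Icc 1 (n - 1) →
      c m * ∑ i ∈ Icc 1 m, a ^ (m - i) * b ^ (i - 1) = 0 := fun m hm hm' => by
    obtain rfl : m = 0 := by simp only [mem_Icc, mem_range] at hm hm'; omega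
    simp
  rw [sum_subset hsub hzero, mul_sum, ← sum_sub_distrib]
  refine sum_congr rfl fun m _ => ?_
  rw [mul_left_comm, sub_mul_sum_Icc_pow_mul_pow, mul_sub]

end

theorem key_recursion_general (p : ℕ → ℝ)
    (H : ℕ → ℝ)
    (hfix : ∀ n, H n = ∑ m ∈ Finset.range (n + 1), p m * H n ^ m) :
    ∀ n : ℕ, 1 ≤ n →
      (H n - H (n - 1)) *
          (1 - ∑ m ∈ Finset.Icc 1 (n - 1), p m *
            ∑ i ∈ Finset.Icc 1 m, H n ^ (m - i) * H (n - 1) ^ (i - 1)) =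
        p n * H n ^ n := by
  intro n hn
  have hfix_n : H n = ∑ m ∈ range n, p m * H n ^ m + p n * H n ^ n := by
    rw [← sum_range_succ, ← hfix]
  have hfix_pred : H (n - 1) = ∑ m ∈ range n, p m * H (n - 1) ^ m := by
    simpa only [Nat.sub_add_cancel hn] using hfix (n - 1)
  linear_combination
    hfix_n - hfix_pred + sum_range_mul_pow_sub_sum_range_mul_pow p (H n) (H (n - 1)) n

/-- The key recursion relating the point masses `q n = H n − H (n−1)` of the
maximal out-degree of a Galton-Watson tree to the offspring distribution `p`:
`q_n · (1 − Σ_{1≤m≤n−1} p m Σ_{1≤i≤m} H(n)^{m−i} H(n−1)^{i−1}) = p n · H(n)^n`. -/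
theorem key_recursion (p : ℕ → ℝ) (hp : ∀ k, 0 ≤ p k) (hsum : ∑' k, p k = 1)
    (H : ℕ → ℝ) (hH : ∀ n, H n ∈ Set.Icc (0 : ℝ) 1)
    (hfix : ∀ n, H n = ∑ m ∈ Finset.range (n + 1), p m * H n ^ m) :
    ∀ n : ℕ, 1 ≤ n →
      (H n - H (n - 1)) *
          (1 - ∑ m ∈ Finset.Icc 1 (n - 1), p m *
            ∑ i ∈ Finset.Icc 1 m, H n ^ (m - i) * H (n - 1) ^ (i - 1)) =
        p n * H n ^ n :=
  key_recursion_general p H hfix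
end

section
/- Let p be a pmf on ℕ with mean μ_p < 1, and let H : ℕ → [0,1] be non-decreasing with H(n) = Σ_{m≤n} p_m H(n)^m for all n. Then for every n ≥ 1, (H(n) − H(n−1))·(1 − μ_p) ≤ p_n. -/
open Finset

/-!
Subtracting the fixed-point equations for `H n` and `H (n - 1)` leaves `p n H(n)ⁿ ≤ p n` plus
`∑_{m<n} p m (H(n)ᵐ - H(n-1)ᵐ)`, and on `[-1, 1]` the map `x ↦ xᵐ` is `m`-Lipschitz, so that
sum is at most `(H n - H (n - 1)) · ∑_{m<n} m p m ≤ (H n - H (n - 1)) · μ_p`.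
-/

section

variable {α : Type*} [CommRing α] [LinearOrder α] [IsStrictOrderedRing α]

theorem abs_pow_sub_pow_le_of_abs_le_one {a b : α} (ha : |a| ≤ 1) (hb : |b| ≤ 1) (m : ℕ) :
    |a ^ m - b ^ m| ≤ m * |a - b| := by
  calc |a ^ m - b ^ m| ≤ |a - b| * m * max |a| |b| ^ (m - 1) := abs_pow_sub_pow_le a b m
    _ ≤ |a - b| * m * 1 := by
      gcongr
      exact pow_le_one₀ (le_max_of_le_left (abs_nonneg a)) (max_le ha hb)
    _ = m * |a - b| := by ring

theorem sum_mul_pow_sub_sum_mul_pow_le {p : ℕ → α} (hp : ∀ k, 0 ≤ p k) {a b : α}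
    (hb : -1 ≤ b) (hba : b ≤ a) (ha : a ≤ 1) (s : Finset ℕ) :
    ∑ m ∈ s, p m * a ^ m - ∑ m ∈ s, p m * b ^ m ≤ (a - b) * ∑ m ∈ s, (m : α) * p m := by
  rw [← sum_sub_distrib, mul_sum]
  refine sum_le_sum fun m _ => ?_
  have hpow : a ^ m - b ^ m ≤ m * (a - b) := by
    have hlip := abs_pow_sub_pow_le_of_abs_le_one (abs_le.2 ⟨by linarith, ha⟩)
      (abs_le.2 ⟨hb, by linarith⟩) m
    rw [abs_of_nonneg (sub_nonneg.2 hba)] at hlip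
    exact (le_abs_self _).trans hlip
  calc p m * a ^ m - p m * b ^ m = p m * (a ^ m - b ^ m) := by ring
    _ ≤ p m * (m * (a - b)) := mul_le_mul_of_nonneg_left hpow (hp m)
    _ = (a - b) * (m * p m) := by ring

theorem sub_le_of_fixed_points {p : ℕ → α} (hp : ∀ k, 0 ≤ p k) {a b : α}
    (hb : -1 ≤ b) (hba : b ≤ a) (ha0 : 0 ≤ a) (ha : a ≤ 1) {n : ℕ}
    (hfa : a = ∑ m ∈ range (n + 1), p m * a ^ m) (hfb : b = ∑ m ∈ range n, p m * b ^ m) :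
    a - b ≤ p n + (a - b) * ∑ m ∈ range n, (m : α) * p m := by
  have hpn : p n * a ^ n ≤ p n := mul_le_of_le_one_right (hp n) (pow_le_one₀ ha0 ha)
  have hsum := sum_mul_pow_sub_sum_mul_pow_le hp hb hba ha (range n)
  rw [sum_range_succ] at hfa
  linarith

end

theorem q_le_p_div_general (p : ℕ → ℝ) (hp : ∀ k, 0 ≤ p k)
    (hmeanS : Summable fun k : ℕ => (k : ℝ) * p k)
    (H : ℕ → ℝ) (hH : ∀ n, H n ∈ Set.Icc (0 : ℝ) 1) (hmono : Monotone H)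
    (hfix : ∀ n, H n = ∑ m ∈ Finset.range (n + 1), p m * H n ^ m) :
    ∀ n : ℕ, 1 ≤ n →
      (H n - H (n - 1)) * (1 - ∑' k : ℕ, (k : ℝ) * p k) ≤ p n := by
  intro n hn
  obtain ⟨k, rfl⟩ := Nat.exists_eq_add_of_le' hn
  rw [Nat.add_sub_cancel]
  have hba : H k ≤ H (k + 1) := hmono k.le_succ
  have hstep := sub_le_of_fixed_points hp (by linarith [(hH k).1]) hba (hH (k + 1)).1
    (hH (k + 1)).2 (hfix (k + 1)) (hfix k)
  have hpartial : ∑ m ∈ range (k + 1), (m : ℝ) * p m ≤ ∑' m : ℕ, (m : ℝ) * p m :=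
    hmeanS.sum_le_tsum _ fun m _ => mul_nonneg m.cast_nonneg (hp m)
  linarith [mul_le_mul_of_nonneg_left hpartial (sub_nonneg.2 hba)]

/-- For a sub-critical pmf `p` and the non-decreasing solution `H` of the
fixed-point equation, the point mass `q n = H n − H (n−1)` satisfies
`q n · (1 − μ_p) ≤ p n`. -/
theorem q_le_p_div (p : ℕ → ℝ) (hp : ∀ k, 0 ≤ p k) (hsum : ∑' k, p k = 1)
    (hmeanS : Summable fun k : ℕ => (k : ℝ) * p k)
    (hmean : ∑' k : ℕ, (k : ℝ) * p k < 1)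
    (H : ℕ → ℝ) (hH : ∀ n, H n ∈ Set.Icc (0 : ℝ) 1) (hmono : Monotone H)
    (hfix : ∀ n, H n = ∑ m ∈ Finset.range (n + 1), p m * H n ^ m) :
    ∀ n : ℕ, 1 ≤ n →
      (H n - H (n - 1)) * (1 - ∑' k : ℕ, (k : ℝ) * p k) ≤ p n :=
  q_le_p_div_general p hp hmeanS H hH hmono hfix
end

section
/- Let p be a sub-critical pmf on ℕ (μ_p < 1) with unbounded support, and let H : ℕ → [0,1] be non-decreasing with H(n) = Σ_{m≤n} p_m H(n)^m, H(n) → 1. Then 1 − H(n) = o(1/n), and consequently H(n)^n → 1 as n → ∞. -/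
open Filter Topology Finset

/-! Write `μ = ∑ k p_k` and `F̄(n) = ∑_{k > n} p_k`. Subtracting the fixed-point equation from
`1 = ∑_{m ≤ n} p_m + F̄(n)` gives `1 - H(n) = ∑_{m ≤ n} p_m (1 - H(n)^m) + F̄(n)`, and Bernoulli's
inequality `1 - x^m ≤ m (1 - x)` turns this into `(1 - H(n)) (1 - μ) ≤ F̄(n)`. Finiteness of the
mean forces `n F̄(n) ≤ ∑_{k > n} k p_k → 0`, so `1 - H(n) = o(1/n)`; Bernoulli once more gives
`1 - n (1 - H(n)) ≤ H(n)^n ≤ 1`. -/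

lemma one_sub_pow_le_nat_mul_one_sub {x : ℝ} (hx : 0 ≤ x) (m : ℕ) : 1 - x ^ m ≤ m * (1 - x) := by
  linarith [one_add_mul_sub_le_pow (by linarith : (-1 : ℝ) ≤ x) m]

lemma tendsto_nat_mul_tsum_nat_add {f : ℕ → ℝ} (hf : ∀ k, 0 ≤ f k)
    (hmean : Summable fun k : ℕ => (k : ℝ) * f k) :
    Tendsto (fun n : ℕ => (n : ℝ) * ∑' k, f (k + n)) atTop (𝓝 0) := by
  have hle : ∀ n k : ℕ, (n : ℝ) * f (k + n) ≤ ((k + n : ℕ) : ℝ) * f (k + n) := fun n k =>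
    mul_le_mul_of_nonneg_right (by push_cast; linarith [k.cast_nonneg (α := ℝ)]) (hf _)
  have hshift : ∀ n : ℕ, Summable fun k : ℕ => ((k + n : ℕ) : ℝ) * f (k + n) := fun n =>
    (summable_nat_add_iff n).2 hmean
  refine squeeze_zero (fun n => mul_nonneg n.cast_nonneg (tsum_nonneg fun k => hf _))
    (fun n => ?_) (tendsto_sum_nat_add fun k : ℕ => (k : ℝ) * f k)
  rw [← tsum_mul_left]
  exact Summable.tsum_le_tsum (hle n)
    ((hshift n).of_nonneg_of_le (fun k => mul_nonneg n.cast_nonneg (hf _)) (hle n)) (hshift n)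

lemma one_sub_mul_one_sub_tsum_mul_le_tsum_nat_add {p : ℕ → ℝ} (hp : ∀ k, 0 ≤ p k)
    (hsum : HasSum p 1) (hmean : Summable fun k : ℕ => (k : ℝ) * p k) {n : ℕ} {x : ℝ}
    (hx : x ∈ Set.Icc (0 : ℝ) 1) (hfix : x = ∑ m ∈ range (n + 1), p m * x ^ m) :
    (1 - x) * (1 - ∑' k : ℕ, (k : ℝ) * p k) ≤ ∑' k, p (k + (n + 1)) := by
  have hsplit := hsum.summable.sum_add_tsum_nat_add (n + 1)
  rw [hsum.tsum_eq] at hsplit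
  have hbernoulli : ∑ m ∈ range (n + 1), p m * (1 - x ^ m)
      ≤ (∑ m ∈ range (n + 1), (m : ℝ) * p m) * (1 - x) := by
    rw [sum_mul]
    refine sum_le_sum fun m _ => ?_
    nlinarith [one_sub_pow_le_nat_mul_one_sub hx.1 m, hp m]
  have hpartial : ∑ m ∈ range (n + 1), (m : ℝ) * p m ≤ ∑' k : ℕ, (k : ℝ) * p k :=
    hmean.sum_le_tsum _ fun k _ => mul_nonneg k.cast_nonneg (hp k)
  have hexpand : ∑ m ∈ range (n + 1), p m * (1 - x ^ m)
      = ∑ m ∈ range (n + 1), p m - ∑ m ∈ range (n + 1), p m * x ^ m := by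
    rw [← sum_sub_distrib]
    exact sum_congr rfl fun m _ => by ring
  nlinarith [mul_le_mul_of_nonneg_right hpartial (sub_nonneg.2 hx.2)]

lemma tendsto_pow_self_of_tendsto_nat_mul_one_sub {a : ℕ → ℝ} (ha : ∀ n, a n ∈ Set.Icc (0 : ℝ) 1)
    (h : Tendsto (fun n : ℕ => (n : ℝ) * (1 - a n)) atTop (𝓝 0)) :
    Tendsto (fun n : ℕ => a n ^ n) atTop (𝓝 1) := by
  refine tendsto_of_tendsto_of_tendsto_of_le_of_le (by simpa using h.const_sub 1)
    tendsto_const_nhds (fun n => ?_) (fun n => pow_le_one₀ (ha n).1 (ha n).2)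
  linarith [one_sub_pow_le_nat_mul_one_sub (ha n).1 n]

theorem H_tail_little_o_and_Hn_pow_n_general (p : ℕ → ℝ) (hp : ∀ k, 0 ≤ p k)
    (hsum : ∑' k, p k = 1)
    (hmeanS : Summable fun k : ℕ => (k : ℝ) * p k)
    (hmean : ∑' k : ℕ, (k : ℝ) * p k < 1)
    (H : ℕ → ℝ) (hH : ∀ n, H n ∈ Set.Icc (0 : ℝ) 1)
    (hfix : ∀ n, H n = ∑ m ∈ Finset.range (n + 1), p m * H n ^ m) :
    Tendsto (fun n : ℕ => (n : ℝ) * (1 - H n)) atTop (𝓝 0) ∧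
      Tendsto (fun n : ℕ => H n ^ n) atTop (𝓝 1) := by
  set μ := ∑' k : ℕ, (k : ℝ) * p k
  have hp1 : HasSum p 1 := by
    by_contra h
    simp [tsum_eq_zero_of_not_summable fun hs => h (hsum ▸ hs.hasSum)] at hsum
  have hμ : 0 < 1 - μ := by linarith
  have htail : Tendsto (fun n : ℕ => ((n + 1 : ℕ) : ℝ) * ∑' k, p (k + (n + 1))) atTop (𝓝 0) :=
    (tendsto_nat_mul_tsum_nat_add hp hmeanS).comp (tendsto_add_atTop_nat 1)
  have hbound : ∀ n : ℕ, (n : ℝ) * (1 - H n)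
      ≤ (((n + 1 : ℕ) : ℝ) * ∑' k, p (k + (n + 1))) / (1 - μ) := fun n => by
    have hH1 : 0 ≤ 1 - H n := sub_nonneg.2 (hH n).2
    rw [le_div_iff₀ hμ, mul_assoc]
    gcongr
    · linarith
    · exact one_sub_mul_one_sub_tsum_mul_le_tsum_nat_add hp hp1 hmeanS (hH n) (hfix n)
  have hfirst : Tendsto (fun n : ℕ => (n : ℝ) * (1 - H n)) atTop (𝓝 0) :=
    squeeze_zero (fun n => mul_nonneg n.cast_nonneg (sub_nonneg.2 (hH n).2)) hbound
      (by simpa using htail.div_const (1 - μ))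
  exact ⟨hfirst, tendsto_pow_self_of_tendsto_nat_mul_one_sub hH hfirst⟩

/-- For a sub-critical unbounded pmf `p` with maximal-out-degree cdf `H`,
one has `1 − H(n) = o(1/n)`, and consequently `H(n)^n → 1`. -/
theorem H_tail_little_o_and_Hn_pow_n (p : ℕ → ℝ) (hp : ∀ k, 0 ≤ p k)
    (hsum : ∑' k, p k = 1)
    (hmeanS : Summable fun k : ℕ => (k : ℝ) * p k)
    (hmean : ∑' k : ℕ, (k : ℝ) * p k < 1)
    (hunb : {n : ℕ | 0 < p n}.Infinite)
    (H : ℕ → ℝ) (hH : ∀ n, H n ∈ Set.Icc (0 : ℝ) 1) (hmono : Monotone H)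
    (hfix : ∀ n, H n = ∑ m ∈ Finset.range (n + 1), p m * H n ^ m)
    (hlim : Tendsto H atTop (𝓝 1)) :
    Tendsto (fun n : ℕ => (n : ℝ) * (1 - H n)) atTop (𝓝 0) ∧
      Tendsto (fun n : ℕ => H n ^ n) atTop (𝓝 1) :=
  H_tail_little_o_and_Hn_pow_n_general p hp hsum hmeanS hmean H hH hfix
end

section
/- Let p be a pmf on ℕ with finite mean μ_p, and let H : ℕ → [0,1] be non-decreasing with H(n) → 1 as n → ∞. Then lim_{n→∞} (1 − Σ_{1≤m≤n−1} p_m Σ_{1≤i≤m} H(n)^{m−i} H(n−1)^{i−1}) = 1 − μ_p. -/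
open Filter Topology Finset

/-!
Each inner sum lies in `[0, m]` and tends to `m`, so the `m`-th summand `p m * (inner sum)` is
dominated by `m * p m`, which is summable because the mean is finite. Dominated convergence for
series (Tannery's theorem) then sends the truncated outer sums to `∑' m, m * p m`.
-/

lemma tendsto_finset_sum_of_dominated_convergence {α β G : Type*} {𝓕 : Filter α}
    [NormedAddCommGroup G] [CompleteSpace G]
    {f : α → β → G} {g : β → G} {bound : β → ℝ} {s : α → Finset β} (h_sum : Summable bound)
    (hs : ∀ k, ∀ᶠ n in 𝓕, k ∈ s n)
    (hab : ∀ k, Tendsto (f · k) 𝓕 (𝓝 (g k)))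
    (h_bound : ∀ᶠ n in 𝓕, ∀ k, ‖f n k‖ ≤ bound k) :
    Tendsto (fun n ↦ ∑ k ∈ s n, f n k) 𝓕 (𝓝 (∑' k, g k)) := by
  simp only [fun n ↦ sum_eq_tsum_indicator (f n) (s n)]
  refine tendsto_tsum_of_dominated_convergence h_sum (fun k ↦ ?_) ?_
  · refine (hab k).congr' ?_
    filter_upwards [hs k] with n hn
    rw [Set.indicator_of_mem (mem_coe.2 hn)]
  · filter_upwards [h_bound] with n hn k
    exact (norm_indicator_le_norm_self _ _).trans (hn k)

lemma tendsto_sum_Icc_pow_mul_pow {α R : Type*} [CommSemiring R] [TopologicalSpace R]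
    [IsTopologicalSemiring R] {l : Filter α} {a b : α → R}
    (ha : Tendsto a l (𝓝 1)) (hb : Tendsto b l (𝓝 1)) (m : ℕ) :
    Tendsto (fun n ↦ ∑ i ∈ Icc 1 m, a n ^ (m - i) * b n ^ (i - 1)) l (𝓝 m) := by
  simpa using tendsto_finsetSum (Icc 1 m) fun i _ ↦ (ha.pow (m - i)).mul (hb.pow (i - 1))

lemma sum_Icc_pow_mul_pow_nonneg {a b : ℝ} (ha : 0 ≤ a) (hb : 0 ≤ b) (m : ℕ) :
    0 ≤ ∑ i ∈ Icc 1 m, a ^ (m - i) * b ^ (i - 1) :=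
  sum_nonneg fun _ _ ↦ mul_nonneg (pow_nonneg ha _) (pow_nonneg hb _)

lemma sum_Icc_pow_mul_pow_le {a b : ℝ} (ha : a ∈ Set.Icc (0 : ℝ) 1) (hb : b ∈ Set.Icc (0 : ℝ) 1)
    (m : ℕ) : ∑ i ∈ Icc 1 m, a ^ (m - i) * b ^ (i - 1) ≤ m := by
  calc ∑ i ∈ Icc 1 m, a ^ (m - i) * b ^ (i - 1) ≤ ∑ _i ∈ Icc 1 m, (1 : ℝ) :=
        sum_le_sum fun i _ ↦ mul_le_one₀ (pow_le_one₀ ha.1 ha.2) (pow_nonneg hb.1 _)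
          (pow_le_one₀ hb.1 hb.2)
    _ = m := by simp

lemma sum_Icc_one_pred_eq_sum_range {M : Type*} [AddCommMonoid M] {f : ℕ → M} (hf : f 0 = 0)
    (n : ℕ) : ∑ m ∈ Icc 1 (n - 1), f m = ∑ m ∈ range n, f m := by
  refine sum_subset (fun m hm ↦ ?_) fun m hm hm' ↦ ?_
  · simp only [mem_Icc, mem_range] at hm ⊢; omega
  · obtain rfl : m = 0 := by simp only [mem_Icc, mem_range] at hm hm'; omega
    exact hf

theorem limit_one_sub_sum_general (p : ℕ → ℝ) (hp : ∀ k, 0 ≤ p k)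
    (hmeanS : Summable fun k : ℕ => (k : ℝ) * p k)
    (H : ℕ → ℝ) (hH : ∀ n, H n ∈ Set.Icc (0 : ℝ) 1)
    (hlim : Tendsto H atTop (𝓝 1)) :
    Tendsto
      (fun n : ℕ =>
        1 - ∑ m ∈ Finset.Icc 1 (n - 1), p m *
          ∑ i ∈ Finset.Icc 1 m, H n ^ (m - i) * H (n - 1) ^ (i - 1))
      atTop (𝓝 (1 - ∑' k : ℕ, (k : ℝ) * p k)) := by
  refine tendsto_const_nhds.sub <|
    Tendsto.congr (fun n ↦ (sum_Icc_one_pred_eq_sum_range (by simp) n).symm) ?_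
  refine tendsto_finset_sum_of_dominated_convergence hmeanS
    (fun m ↦ eventually_gt_atTop m |>.mono fun n ↦ mem_range.2) (fun m ↦ ?_) ?_
  · rw [mul_comm]
    exact tendsto_const_nhds.mul <|
      tendsto_sum_Icc_pow_mul_pow hlim (hlim.comp (tendsto_sub_atTop_nat 1)) m
  · refine .of_forall fun n m ↦ ?_
    rw [Real.norm_of_nonneg (mul_nonneg (hp m) (sum_Icc_pow_mul_pow_nonneg (hH n).1 (hH _).1 m)),
      mul_comm]
    exact mul_le_mul_of_nonneg_right (sum_Icc_pow_mul_pow_le (hH n) (hH _) m) (hp m)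

/-- If `p` is a pmf with finite mean `μ_p` and `H : ℕ → [0,1]` is
non-decreasing with `H n → 1`, then
`1 − Σ_{1≤m≤n−1} p m Σ_{1≤i≤m} H(n)^{m−i} H(n−1)^{i−1} → 1 − μ_p`. -/
theorem limit_one_sub_sum (p : ℕ → ℝ) (hp : ∀ k, 0 ≤ p k) (hsum : ∑' k, p k = 1)
    (hmeanS : Summable fun k : ℕ => (k : ℝ) * p k)
    (H : ℕ → ℝ) (hH : ∀ n, H n ∈ Set.Icc (0 : ℝ) 1) (hmono : Monotone H)
    (hlim : Tendsto H atTop (𝓝 1)) :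
    Tendsto
      (fun n : ℕ =>
        1 - ∑ m ∈ Finset.Icc 1 (n - 1), p m *
          ∑ i ∈ Finset.Icc 1 m, H n ^ (m - i) * H (n - 1) ^ (i - 1))
      atTop (𝓝 (1 - ∑' k : ℕ, (k : ℝ) * p k)) :=
  limit_one_sub_sum_general p hp hmeanS H hH hlim
end

section
/- (Tail equivalence for sub-critical Galton-Watson trees.) Let p be a sub-critical (μ_p < 1) unbounded pmf on ℕ, and let H : ℕ → [0,1] be the non-decreasing solution of H(n) = Σ_{m≤n} p_m H(n)^m with H(n) → 1. Set q_n = H(n) − H(n−1), F̄(n) = Σ_{k>n} p_k, H̄(n) = 1 − H(n). Then p_n/q_n → 1 − μ_p along the subsequence {n : p_n > 0}, and F̄(n)/H̄(n) → 1 − μ_p as n → ∞. -/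
/-!
Write `f_N(x) = ∑_{m<N} p_m x^m`. The fixed-point equations at `n` and `n - 1` give
`q_n (1 - S_n) = p_n H(n)^n`, where `S_n` is the slope of `f_n` between `H(n-1)` and `H(n)`;
the one at `n`, with `∑ p = 1`, gives `F̄(n) = H̄(n) (1 - T_n)`, where `T_n` is the slope of
`f_{n+1}` between `H(n)` and `1`. Both slopes are sums `∑ p_m c_m` with `|c_m| ≤ m` and
`c_m → m`, so they tend to `μ_p` by dominated convergence. This is the second limit. It also gives
`n H̄(n) ~ n F̄(n) / (1 - μ_p) → 0` because `∑ k p_k < ∞`, hence `H(n)^n → 1` by Bernoulli's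
inequality, and then `p_n / q_n = (1 - S_n) / H(n)^n → 1 - μ_p`.
-/

open Filter Topology Finset

section Tail

variable {α : Type*} [AddCommGroup α] [TopologicalSpace α]

lemma tsum_ite_lt_eq_tsum_nat_add (f : ℕ → α) (n : ℕ) :
    (∑' k, if n < k then f k else 0) = ∑' i, f (i + (n + 1)) := by
  rw [← (add_left_injective (n + 1)).tsum_eq]
  · refine tsum_congr fun i => if_pos (by omega)
  · intro k hk
    have : n < k := by by_contra h; exact hk (if_neg h)
    exact ⟨k - (n + 1), by simp; omega⟩

lemma tendsto_tsum_ite_lt_zero [IsTopologicalAddGroup α] [T2Space α] (f : ℕ → α) :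
    Tendsto (fun n : ℕ => ∑' k, if n < k then f k else 0) atTop (𝓝 0) := by
  simp_rw [tsum_ite_lt_eq_tsum_nat_add]
  exact (tendsto_sum_nat_add f).comp (tendsto_add_atTop_nat 1)

lemma tsum_ite_lt_eq_sub_sum [IsTopologicalAddGroup α] [T2Space α] {f : ℕ → α}
    (hf : Summable f) (n : ℕ) :
    (∑' k, if n < k then f k else 0) = ∑' k, f k - ∑ k ∈ range (n + 1), f k := by
  rw [tsum_ite_lt_eq_tsum_nat_add, ← hf.sum_add_tsum_nat_add (n + 1), add_sub_cancel_left]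

end Tail

lemma tendsto_natCast_mul_tsum_ite_lt_zero {p : ℕ → ℝ} (hp : ∀ k, 0 ≤ p k)
    (hmean : Summable fun k : ℕ => (k : ℝ) * p k) :
    Tendsto (fun n : ℕ => (n : ℝ) * ∑' k, if n < k then p k else 0) atTop (𝓝 0) := by
  refine squeeze_zero (fun n => ?_) (fun n => ?_) (tendsto_tsum_ite_lt_zero fun k => (k : ℝ) * p k)
  · exact mul_nonneg n.cast_nonneg (tsum_nonneg fun k => by split_ifs <;> simp [hp])
  · have hle : ∀ i, (n : ℝ) * p (i + (n + 1)) ≤ ((i + (n + 1) : ℕ) : ℝ) * p (i + (n + 1)) :=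
      fun i => mul_le_mul_of_nonneg_right (by norm_cast; omega) (hp _)
    have hs := (summable_nat_add_iff (n + 1)).mpr hmean
    simp_rw [tsum_ite_lt_eq_tsum_nat_add, ← tsum_mul_left]
    exact (hs.of_nonneg_of_le (fun i => mul_nonneg n.cast_nonneg (hp _)) hle).tsum_le_tsum hle hs

lemma tsum_ite_lt_pos {p : ℕ → ℝ} (hp : ∀ k, 0 ≤ p k) (hs : Summable p)
    (hunb : {n : ℕ | 0 < p n}.Infinite) (n : ℕ) :
    0 < ∑' k, if n < k then p k else 0 := by
  have hnonneg : ∀ k, 0 ≤ if n < k then p k else 0 := fun k => by split_ifs <;> simp [hp]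
  obtain ⟨k, hk, hnk⟩ := hunb.exists_gt n
  refine Summable.tsum_pos (hs.of_nonneg_of_le hnonneg fun k => ?_) hnonneg k (by rwa [if_pos hnk])
  split_ifs <;> simp [hp]

section PartialPgf

variable {R : Type*} [CommRing R]

def partialPgf (p : ℕ → R) (N : ℕ) (x : R) : R :=
  ∑ m ∈ range N, p m * x ^ m

def partialPgfSlope (p : ℕ → R) (N : ℕ) (x y : R) : R :=
  ∑ m ∈ range N, p m * ∑ j ∈ range m, x ^ j * y ^ (m - 1 - j)

lemma partialPgf_succ (p : ℕ → R) (N : ℕ) (x : R) :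
    partialPgf p (N + 1) x = partialPgf p N x + p N * x ^ N :=
  sum_range_succ _ _

lemma partialPgfSlope_mul_sub (p : ℕ → R) (N : ℕ) (x y : R) :
    partialPgfSlope p N x y * (x - y) = partialPgf p N x - partialPgf p N y := by
  rw [partialPgfSlope, partialPgf, partialPgf, ← sum_sub_distrib, sum_mul]
  exact sum_congr rfl fun m _ => by rw [mul_assoc, geom_sum₂_mul, mul_sub]

end PartialPgf

lemma abs_geom_sum₂_le {x y : ℝ} (hx : x ∈ Set.Icc 0 1) (hy : y ∈ Set.Icc 0 1) (m : ℕ) :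
    |∑ j ∈ range m, x ^ j * y ^ (m - 1 - j)| ≤ m := by
  calc |∑ j ∈ range m, x ^ j * y ^ (m - 1 - j)|
      ≤ ∑ j ∈ range m, |x ^ j * y ^ (m - 1 - j)| := abs_sum_le_sum_abs _ _
    _ ≤ ∑ _j ∈ range m, (1 : ℝ) := by
        refine sum_le_sum fun j _ => ?_
        rw [abs_of_nonneg (mul_nonneg (pow_nonneg hx.1 _) (pow_nonneg hy.1 _))]
        exact mul_le_one₀ (pow_le_one₀ hx.1 hx.2) (pow_nonneg hy.1 _) (pow_le_one₀ hy.1 hy.2)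
    _ = m := by simp

lemma tendsto_partialPgfSlope {p : ℕ → ℝ} (hp : ∀ k, 0 ≤ p k)
    (hmean : Summable fun k : ℕ => (k : ℝ) * p k) {x y : ℕ → ℝ}
    (hx : ∀ n, x n ∈ Set.Icc 0 1) (hy : ∀ n, y n ∈ Set.Icc 0 1)
    (hx1 : Tendsto x atTop (𝓝 1)) (hy1 : Tendsto y atTop (𝓝 1)) {N : ℕ → ℕ}
    (hN : Tendsto N atTop atTop) :
    Tendsto (fun n => partialPgfSlope p (N n) (x n) (y n)) atTop
      (𝓝 (∑' k : ℕ, (k : ℝ) * p k)) := by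
  set G : ℕ → ℕ → ℝ := fun n m => ∑ j ∈ range m, x n ^ j * y n ^ (m - 1 - j)
  have hG : ∀ m, Tendsto (fun n => p m * G n m) atTop (𝓝 (m * p m)) := by
    intro m
    have h : Tendsto (fun n => G n m) atTop (𝓝 (∑ j ∈ range m, (1 : ℝ) ^ j * 1 ^ (m - 1 - j))) :=
      tendsto_finsetSum _ fun j _ => (hx1.pow j).mul (hy1.pow _)
    simpa [mul_comm] using h.const_mul (p m)
  have hsum : ∀ n, partialPgfSlope p (N n) (x n) (y n)
      = ∑' m, if m < N n then p m * G n m else 0 := by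
    intro n
    rw [tsum_eq_sum (s := range (N n)) fun m hm => if_neg (by simpa using hm)]
    exact sum_congr rfl fun m hm => (if_pos (mem_range.mp hm)).symm
  simp_rw [hsum]
  refine tendsto_tsum_of_dominated_convergence hmean
    (fun m => (hG m).congr' ((hN.eventually_gt_atTop m).mono fun n hn => (if_pos hn).symm))
    (Eventually.of_forall fun n m => ?_)
  split_ifs
  · rw [norm_mul, Real.norm_of_nonneg (hp m), mul_comm]
    exact mul_le_mul_of_nonneg_right (abs_geom_sum₂_le (hx n) (hy n) m) (hp m)
  · simpa using mul_nonneg m.cast_nonneg (hp m)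

lemma tendsto_pow_self_of_tendsto_natCast_mul_one_sub {x : ℕ → ℝ} (hx : ∀ n, x n ∈ Set.Icc 0 1)
    (h : Tendsto (fun n : ℕ => (n : ℝ) * (1 - x n)) atTop (𝓝 0)) :
    Tendsto (fun n => x n ^ n) atTop (𝓝 1) := by
  refine tendsto_of_tendsto_of_tendsto_of_le_of_le (by simpa using h.const_sub 1)
    tendsto_const_nhds (fun n => ?_) (fun n => pow_le_one₀ (hx n).1 (hx n).2)
  have := one_add_mul_le_pow (a := x n - 1) (by linarith [(hx n).1]) n
  simp only [add_sub_cancel] at this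
  linarith

section FixedPoint

variable {p H : ℕ → ℝ}

lemma sub_pred_mul_one_sub_partialPgfSlope (hfix : ∀ n, H n = partialPgf p (n + 1) (H n))
    {n : ℕ} (hn : n ≠ 0) :
    (H n - H (n - 1)) * (1 - partialPgfSlope p n (H n) (H (n - 1))) = p n * H n ^ n := by
  have hcur := hfix n
  have hpred := hfix (n - 1)
  rw [partialPgf_succ] at hcur
  rw [Nat.sub_add_cancel (Nat.one_le_iff_ne_zero.mpr hn)] at hpred
  linear_combination hcur - hpred - partialPgfSlope_mul_sub p n (H n) (H (n - 1))

lemma div_sub_pred_eq_one_sub_partialPgfSlope_div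
    (hfix : ∀ n, H n = partialPgf p (n + 1) (H n)) {n : ℕ} (hn : n ≠ 0) (hpn : p n ≠ 0)
    (hHn : H n ^ n ≠ 0) :
    p n / (H n - H (n - 1)) = (1 - partialPgfSlope p n (H n) (H (n - 1))) / H n ^ n := by
  have hA := sub_pred_mul_one_sub_partialPgfSlope hfix hn
  have hq : H n - H (n - 1) ≠ 0 := fun hq => by
    rw [hq, zero_mul] at hA
    exact mul_ne_zero hpn hHn hA.symm
  rw [div_eq_div_iff hq hHn]
  linear_combination -hA

lemma tsum_ite_lt_eq_one_sub_mul (hfix : ∀ n, H n = partialPgf p (n + 1) (H n))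
    (hp : Summable p) (hsum : ∑' k, p k = 1) (n : ℕ) :
    (∑' k, if n < k then p k else 0) = (1 - H n) * (1 - partialPgfSlope p (n + 1) (H n) 1) := by
  have h1 : partialPgf p (n + 1) 1 = ∑ k ∈ range (n + 1), p k := by simp [partialPgf]
  rw [tsum_ite_lt_eq_sub_sum hp, hsum, ← h1]
  linear_combination hfix n - partialPgfSlope_mul_sub p (n + 1) (H n) 1

end FixedPoint

theorem tail_equivalence_general (p : ℕ → ℝ) (hp : ∀ k, 0 ≤ p k) (hsum : ∑' k, p k = 1)
    (hmeanS : Summable fun k : ℕ => (k : ℝ) * p k)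
    (hmean : ∑' k : ℕ, (k : ℝ) * p k < 1)
    (hunb : {n : ℕ | 0 < p n}.Infinite)
    (H : ℕ → ℝ) (hH : ∀ n, H n ∈ Set.Icc (0 : ℝ) 1)
    (hfix : ∀ n, H n = ∑ m ∈ Finset.range (n + 1), p m * H n ^ m)
    (hlim : Tendsto H atTop (𝓝 1)) :
    Tendsto (fun n : ℕ => p n / (H n - H (n - 1)))
        (atTop ⊓ Filter.principal {n : ℕ | 0 < p n})
        (𝓝 (1 - ∑' k : ℕ, (k : ℝ) * p k)) ∧
      Tendsto (fun n : ℕ => (∑' k : ℕ, if n < k then p k else 0) / (1 - H n))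
        atTop (𝓝 (1 - ∑' k : ℕ, (k : ℝ) * p k)) := by
  have hps : Summable p := by
    by_contra h
    simp [tsum_eq_zero_of_not_summable h] at hsum
  set μ := ∑' k : ℕ, (k : ℝ) * p k
  set S := fun n => partialPgfSlope p n (H n) (H (n - 1))
  set T := fun n => partialPgfSlope p (n + 1) (H n) 1
  have hS : Tendsto (fun n => 1 - S n) atTop (𝓝 (1 - μ)) :=
    (tendsto_partialPgfSlope hp hmeanS hH (fun n => hH _) hlim
      (hlim.comp (tendsto_sub_atTop_nat 1)) tendsto_id).const_sub 1
  have hT : Tendsto (fun n => 1 - T n) atTop (𝓝 (1 - μ)) :=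
    (tendsto_partialPgfSlope hp hmeanS hH (fun _ => ⟨zero_le_one, le_rfl⟩) hlim
      tendsto_const_nhds (tendsto_add_atTop_nat 1)).const_sub 1
  have htail : ∀ n, (∑' k, if n < k then p k else 0) = (1 - H n) * (1 - T n) :=
    tsum_ite_lt_eq_one_sub_mul hfix hps hsum
  have hμ : 1 - μ ≠ 0 := (sub_pos.mpr hmean).ne'
  have hpow : Tendsto (fun n => H n ^ n) atTop (𝓝 1) := by
    refine tendsto_pow_self_of_tendsto_natCast_mul_one_sub hH ?_
    have h := (tendsto_natCast_mul_tsum_ite_lt_zero hp hmeanS).div hT hμ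
    rw [zero_div] at h
    refine h.congr' ((hT.eventually_ne hμ).mono fun n hn => ?_)
    rw [Pi.div_apply, htail, ← mul_assoc, mul_div_cancel_right₀ _ hn]
  constructor
  · have h := hS.div hpow one_ne_zero
    rw [div_one] at h
    refine (h.mono_left inf_le_left).congr' (eventually_inf_principal.mpr ?_)
    filter_upwards [eventually_ne_atTop 0, hpow.eventually_ne one_ne_zero] with n hn hHn hpn
    exact (div_sub_pred_eq_one_sub_partialPgfSlope_div hfix hn hpn.ne' hHn).symm
  · have hH1 : ∀ n, 1 - H n ≠ 0 := fun n h => by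
      simpa [htail, h] using tsum_ite_lt_pos hp hps hunb n
    exact hT.congr fun n => by rw [htail, mul_div_cancel_left₀ _ (hH1 n)]

/-- Tail equivalence for sub-critical Galton-Watson trees: with
`q n = H n − H (n−1)`, `F̄(n) = Σ_{k>n} p k` and `H̄(n) = 1 − H n`, one has
`p n / q n → 1 − μ_p` along `{n : p n > 0}` and `F̄(n)/H̄(n) → 1 − μ_p`. -/
theorem tail_equivalence (p : ℕ → ℝ) (hp : ∀ k, 0 ≤ p k) (hsum : ∑' k, p k = 1)
    (hmeanS : Summable fun k : ℕ => (k : ℝ) * p k)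
    (hmean : ∑' k : ℕ, (k : ℝ) * p k < 1)
    (hunb : {n : ℕ | 0 < p n}.Infinite)
    (H : ℕ → ℝ) (hH : ∀ n, H n ∈ Set.Icc (0 : ℝ) 1) (hmono : Monotone H)
    (hfix : ∀ n, H n = ∑ m ∈ Finset.range (n + 1), p m * H n ^ m)
    (hlim : Tendsto H atTop (𝓝 1)) :
    Tendsto (fun n : ℕ => p n / (H n - H (n - 1)))
        (atTop ⊓ Filter.principal {n : ℕ | 0 < p n})
        (𝓝 (1 - ∑' k : ℕ, (k : ℝ) * p k)) ∧
      Tendsto (fun n : ℕ => (∑' k : ℕ, if n < k then p k else 0) / (1 - H n))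
        atTop (𝓝 (1 - ∑' k : ℕ, (k : ℝ) * p k)) :=
  tail_equivalence_general p hp hsum hmeanS hmean hunb H hH hfix hlim
end

section
/- Let p be a sub-critical unbounded pmf on ℕ with cdf H of the maximal out-degree as above, q_n = H(n) − H(n−1). Fix ℓ ∈ ℕ and k ∈ ℕ. Then lim_{n→∞} (1/q_n)·Σ_{j=max(ℓ+1,k)}^{n−1} p_j·(H(n)^{j−ℓ} − H(n−1)^{j−ℓ}) = Σ_{j≥max(ℓ+1,k)} (j−ℓ)·p_j, where the limit is along {n : q_n > 0}. -/
/-!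
Since `(a ^ m - b ^ m) / (a - b) = ∑_{i < m} a ^ i b ^ (m - 1 - i)`, the difference quotient tends
to `m` as `a, b → 1` and is bounded by `m` in absolute value when `|a|, |b| ≤ 1`. Hence the `j`-th
term of the sum tends to `(j - ℓ) p_j` and is dominated by `j p_j`, which is summable, so the
theorem is dominated convergence for series (Tannery's theorem).
-/

open Filter Topology Finset

theorem abs_pow_sub_pow_div_sub_le {α : Type*} [Field α] [LinearOrder α] [IsStrictOrderedRing α]
    {a b : α} (ha : |a| ≤ 1) (hb : |b| ≤ 1) (m : ℕ) :
    |(a ^ m - b ^ m) / (a - b)| ≤ m := by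
  rcases eq_or_ne a b with rfl | hab
  · simp
  rw [abs_div, div_le_iff₀ (abs_pos.2 (sub_ne_zero.2 hab))]
  calc |a ^ m - b ^ m| ≤ |a - b| * m * max |a| |b| ^ (m - 1) := abs_pow_sub_pow_le ..
    _ ≤ |a - b| * m * 1 := by gcongr; exact pow_le_one₀ (by positivity) (max_le ha hb)
    _ = m * |a - b| := by ring

theorem tendsto_pow_sub_pow_div_sub {α 𝕜 : Type*} [Field 𝕜] [TopologicalSpace 𝕜]
    [IsTopologicalRing 𝕜] {l : Filter α} {a b : α → 𝕜}
    (ha : Tendsto a l (𝓝 1)) (hb : Tendsto b l (𝓝 1)) (hab : ∀ᶠ n in l, a n ≠ b n) (m : ℕ) :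
    Tendsto (fun n => (a n ^ m - b n ^ m) / (a n - b n)) l (𝓝 m) := by
  have hgeom : Tendsto (fun n => ∑ i ∈ range m, a n ^ i * b n ^ (m - 1 - i)) l (𝓝 m) := by
    simpa using tendsto_finsetSum (range m) fun i _ => (ha.pow i).mul (hb.pow (m - 1 - i))
  refine hgeom.congr' ?_
  filter_upwards [hab] with n hn
  rw [eq_div_iff (sub_ne_zero.2 hn), geom_sum₂_mul]

theorem tendsto_sum_Icc_of_dominated {α G : Type*} [NormedAddCommGroup G] [CompleteSpace G]
    {l : Filter α} {f : α → ℕ → G} {g : ℕ → G} {bound : ℕ → ℝ} {N : α → ℕ} (M : ℕ)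
    (hN : Tendsto N l atTop) (h_sum : Summable bound)
    (h_lim : ∀ j, Tendsto (f · j) l (𝓝 (g j))) (h_bound : ∀ᶠ n in l, ∀ j, ‖f n j‖ ≤ bound j) :
    Tendsto (fun n => ∑ j ∈ Icc M (N n), f n j) l (𝓝 (∑' j, if M ≤ j then g j else 0)) := by
  simp only [fun n => sum_eq_tsum_indicator (f n) (Icc M (N n))]
  refine tendsto_tsum_of_dominated_convergence h_sum (fun j => ?_) ?_
  · split_ifs with hj
    · refine (h_lim j).congr' ?_
      filter_upwards [hN.eventually_ge_atTop j] with n hn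
      simp [hj, hn]
    · simpa [hj] using tendsto_const_nhds
  · filter_upwards [h_bound] with n hn j
    exact (norm_indicator_le_norm_self _ _).trans (hn j)

theorem sum_limit_general (p : ℕ → ℝ) (hp : ∀ k, 0 ≤ p k)
    (hmeanS : Summable fun k : ℕ => (k : ℝ) * p k)
    (H : ℕ → ℝ) (hH : ∀ n, H n ∈ Set.Icc (0 : ℝ) 1)
    (hlim : Tendsto H atTop (𝓝 1)) (ℓ k : ℕ) :
    Tendsto
      (fun n : ℕ =>
        (∑ j ∈ Finset.Icc (max (ℓ + 1) k) (n - 1),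
            p j * (H n ^ (j - ℓ) - H (n - 1) ^ (j - ℓ))) / (H n - H (n - 1)))
      (atTop ⊓ Filter.principal {n : ℕ | 0 < H n - H (n - 1)})
      (𝓝 (∑' j : ℕ, if max (ℓ + 1) k ≤ j then ((j : ℝ) - ℓ) * p j else 0)) := by
  have habs (n : ℕ) : |H n| ≤ 1 := abs_le.2 ⟨by linarith [(hH n).1], (hH n).2⟩
  have hratio (j : ℕ) : Tendsto (fun n => p j * ((H n ^ (j - ℓ) - H (n - 1) ^ (j - ℓ)) /
      (H n - H (n - 1)))) (atTop ⊓ 𝓟 {n | 0 < H n - H (n - 1)}) (𝓝 (p j * (j - ℓ : ℕ))) :=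
    tendsto_const_nhds.mul <| tendsto_pow_sub_pow_div_sub (hlim.mono_left inf_le_left)
      ((hlim.comp (tendsto_sub_atTop_nat 1)).mono_left inf_le_left)
      (eventually_inf_principal.2 (.of_forall fun _ hn => (sub_pos.1 hn).ne')) _
  have hbound (n j : ℕ) : ‖p j * ((H n ^ (j - ℓ) - H (n - 1) ^ (j - ℓ)) /
      (H n - H (n - 1)))‖ ≤ j * p j := by
    rw [norm_mul, Real.norm_of_nonneg (hp j), mul_comm]
    refine mul_le_mul_of_nonneg_right ?_ (hp j)
    exact (abs_pow_sub_pow_div_sub_le (habs n) (habs (n - 1)) _).trans (Nat.cast_le.2 (j.sub_le ℓ))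
  have hlimit : (∑' j : ℕ, if max (ℓ + 1) k ≤ j then ((j : ℝ) - ℓ) * p j else 0) =
      ∑' j : ℕ, if max (ℓ + 1) k ≤ j then p j * (j - ℓ : ℕ) else 0 :=
    tsum_congr fun j => by split_ifs with hj <;> [rw [Nat.cast_sub (by omega), mul_comm]; rfl]
  simp only [sum_div, mul_div_assoc, hlimit]
  exact tendsto_sum_Icc_of_dominated _ ((tendsto_sub_atTop_nat 1).mono_left inf_le_left)
    hmeanS hratio (.of_forall hbound)

/-- Equation (2) of the paper: for a sub-critical unbounded pmf `p` with
maximal-out-degree cdf `H` and `q n = H n − H (n−1)`, for fixed `ℓ, k`,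
`(1/q_n)·Σ_{j=max(ℓ+1,k)}^{n−1} p j (H(n)^{j−ℓ} − H(n−1)^{j−ℓ})
  → Σ_{j≥max(ℓ+1,k)} (j−ℓ) p j` along `{n : q n > 0}`. -/
theorem sum_limit (p : ℕ → ℝ) (hp : ∀ k, 0 ≤ p k) (hsum : ∑' k, p k = 1)
    (hmeanS : Summable fun k : ℕ => (k : ℝ) * p k)
    (hmean : ∑' k : ℕ, (k : ℝ) * p k < 1)
    (hunb : {n : ℕ | 0 < p n}.Infinite)
    (H : ℕ → ℝ) (hH : ∀ n, H n ∈ Set.Icc (0 : ℝ) 1) (hmono : Monotone H)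
    (hfix : ∀ n, H n = ∑ m ∈ Finset.range (n + 1), p m * H n ^ m)
    (hlim : Tendsto H atTop (𝓝 1)) (ℓ k : ℕ) :
    Tendsto
      (fun n : ℕ =>
        (∑ j ∈ Finset.Icc (max (ℓ + 1) k) (n - 1),
            p j * (H n ^ (j - ℓ) - H (n - 1) ^ (j - ℓ))) / (H n - H (n - 1)))
      (atTop ⊓ Filter.principal {n : ℕ | 0 < H n - H (n - 1)})
      (𝓝 (∑' j : ℕ, if max (ℓ + 1) k ≤ j then ((j : ℝ) - ℓ) * p j else 0)) :=
  sum_limit_general p hp hmeanS H hH hlim ℓ k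
end

section
/- Let p be a critical (μ_p = 1) pmf on ℕ and τ a Galton-Watson tree with offspring distribution p. For any finite tree t, any leaf x of t, and any finite tree s, ℙ(τ = t ⊛ (s, x)) = (1/p_0)·ℙ(τ = t)·ℙ(τ = s), where t ⊛ (s, x) is the tree obtained by grafting s on the leaf x of t. -/
open Finset

/-- Finite plane trees in Ulam–Harris labelling: a finite set of words of
naturals containing the root, closed under taking parents, and whose children
are labelled `0, …, k−1`. -/
def IsTree (t : Finset (List ℕ)) : Prop :=
  [] ∈ t ∧ ∀ u ∈ t, ∀ (v : List ℕ) (i : ℕ), u = v ++ [i] →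
    v ∈ t ∧ ∀ j < i, v ++ [j] ∈ t

/-- The out-degree (number of children) of a vertex `u` in the tree `t`. -/
def outDeg (t : Finset (List ℕ)) (u : List ℕ) : ℕ :=
  (t.filter fun v => v ≠ [] ∧ v.dropLast = u).card

/-- `ℙ(τ = t) = Π_{u∈t} p (k_u(t))`, the Galton-Watson probability of the
finite tree `t` under offspring distribution `p`. -/
def gwProb (p : ℕ → ℝ) (t : Finset (List ℕ)) : ℝ :=
  ∏ u ∈ t, p (outDeg t u)

/-- The tree `t ⊛ (s, x)` obtained by grafting the tree `s` on the leaf `x`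
of the tree `t`. -/
def graft (t s : Finset (List ℕ)) (x : List ℕ) : Finset (List ℕ) :=
  t ∪ s.image fun v => x ++ v

/-! Every vertex of `t ⊛ (s, x)` other than `x` keeps its children: a vertex `u ≠ x` of `t`
has the same children as in `t`, since no vertex of `t` lies strictly below the leaf `x`, and a
vertex `x ++ w` has the children `x ++ v` of the children `v` of `w` in `s`. Hence the product
defining `ℙ(τ = t ⊛ (s, x))` is that of `ℙ(τ = t)` with the factor `p 0` of the leaf `x`
replaced by the product defining `ℙ(τ = s)`. -/

theorem ne_nil_and_dropLast_eq_iff {u v : List ℕ} : (v ≠ [] ∧ v.dropLast = u) ↔ ∃ i, v = u ++ [i] := by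
  constructor
  · rintro ⟨hv, rfl⟩
    exact ⟨v.getLast hv, (List.dropLast_append_getLast hv).symm⟩
  · rintro ⟨i, rfl⟩
    simp

theorem outDeg_congr {t t' : Finset (List ℕ)} {u u' : List ℕ}
    (h : ∀ i, u ++ [i] ∈ t ↔ u' ++ [i] ∈ t') : outDeg t u = outDeg t' u' := by
  refine card_nbij' (fun v => u' ++ v.drop u.length) (fun v => u ++ v.drop u'.length)
    ?_ ?_ ?_ ?_
  all_goals
    intro v hv
    simp only [coe_filter, Set.mem_ofPred_eq, ne_nil_and_dropLast_eq_iff] at hv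
    obtain ⟨hvt, i, rfl⟩ := hv
  · simpa [ne_nil_and_dropLast_eq_iff] using (h i).1 hvt
  · simpa [ne_nil_and_dropLast_eq_iff] using (h i).2 hvt
  · simp
  · simp

theorem outDeg_eq_zero_iff {t : Finset (List ℕ)} {x : List ℕ} :
    outDeg t x = 0 ↔ ∀ i, x ++ [i] ∉ t := by
  simp only [outDeg, card_eq_zero, filter_eq_empty_iff, ne_nil_and_dropLast_eq_iff, not_exists]
  exact ⟨fun h i hi => h hi i rfl, fun h v hv i hvi => h i (hvi ▸ hv)⟩

theorem IsTree.mem_of_append_mem {t : Finset (List ℕ)} (ht : IsTree t) {u : List ℕ} :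
    ∀ {v : List ℕ}, u ++ v ∈ t → u ∈ t := by
  intro v
  induction v using List.reverseRecOn with
  | nil => simp
  | append_singleton v i ih =>
    intro hv
    exact ih (ht.2 _ hv (u ++ v) i (by simp)).1

theorem IsTree.eq_of_prefix_of_outDeg_eq_zero {t : Finset (List ℕ)} (ht : IsTree t)
    {x v : List ℕ} (hleaf : outDeg t x = 0) (hv : v ∈ t) (hxv : x <+: v) : v = x := by
  obtain ⟨w, rfl⟩ := hxv
  cases w with
  | nil => simp
  | cons i w =>
    rw [← List.singleton_append, ← List.append_assoc] at hv
    exact absurd (ht.mem_of_append_mem hv) (outDeg_eq_zero_iff.1 hleaf i)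

theorem mem_graft {t s : Finset (List ℕ)} {x v : List ℕ} :
    v ∈ graft t s x ↔ v ∈ t ∨ ∃ w ∈ s, x ++ w = v := by
  simp [graft]

section Graft

variable {t s : Finset (List ℕ)} {x : List ℕ}

theorem outDeg_graft_of_mem (ht : IsTree t) (hxt : x ∈ t) (hleaf : outDeg t x = 0)
    {u : List ℕ} (hu : u ∈ t) (hux : u ≠ x) : outDeg (graft t s x) u = outDeg t u := by
  refine outDeg_congr fun i => ⟨fun hi => ?_, fun hi => mem_graft.2 (Or.inl hi)⟩
  obtain hi | ⟨w, -, hw⟩ := mem_graft.1 hi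
  · exact hi
  · obtain hx | hx := List.prefix_concat_iff.1 (hw ▸ List.prefix_append x w)
    · exact hx ▸ hxt
    · exact absurd (ht.eq_of_prefix_of_outDeg_eq_zero hleaf hu hx) hux

theorem outDeg_graft_append (ht : IsTree t) (hleaf : outDeg t x = 0) (w : List ℕ) :
    outDeg (graft t s x) (x ++ w) = outDeg s w := by
  refine outDeg_congr fun i => ⟨fun hi => ?_, fun hi => mem_graft.2 (Or.inr ⟨_, hi, by simp⟩)⟩
  obtain hi | ⟨w', hw', hw⟩ := mem_graft.1 hi
  · simpa using ht.eq_of_prefix_of_outDeg_eq_zero hleaf hi (by simp [List.append_assoc])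
  · rw [List.append_assoc, List.append_cancel_left_eq] at hw
    exact hw ▸ hw'

theorem graft_eq_erase_union_map (hs : [] ∈ s) :
    graft t s x = t.erase x ∪ s.map ⟨(x ++ ·), List.append_right_injective x⟩ := by
  rw [map_eq_image]
  exact (erase_union_of_mem (mem_image.2 ⟨[], hs, List.append_nil x⟩) t).symm

theorem disjoint_erase_map (ht : IsTree t) (hleaf : outDeg t x = 0) :
    Disjoint (t.erase x) (s.map ⟨(x ++ ·), List.append_right_injective x⟩) := by
  refine disjoint_left.2 fun v hv hvs => ?_
  obtain ⟨w, -, rfl⟩ := mem_map.1 hvs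
  obtain ⟨hne, hvt⟩ := mem_erase.1 hv
  exact hne (ht.eq_of_prefix_of_outDeg_eq_zero hleaf hvt (List.prefix_append x w))

theorem mul_gwProb_graft (p : ℕ → ℝ) (ht : IsTree t) (hs : [] ∈ s) (hxt : x ∈ t)
    (hleaf : outDeg t x = 0) : p 0 * gwProb p (graft t s x) = gwProb p t * gwProb p s := by
  have hgraft : gwProb p (graft t s x) = (∏ u ∈ t.erase x, p (outDeg t u)) * gwProb p s := by
    rw [gwProb, graft_eq_erase_union_map hs, prod_union (disjoint_erase_map ht hleaf), prod_map,
      ← graft_eq_erase_union_map hs]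
    congr 1
    · refine prod_congr rfl fun u hu => ?_
      rw [outDeg_graft_of_mem ht hxt hleaf (mem_of_mem_erase hu) (ne_of_mem_erase hu)]
    · exact prod_congr rfl fun w _ => congrArg p (outDeg_graft_append ht hleaf w)
  rw [hgraft, ← mul_assoc]
  congr 1
  rw [gwProb, ← mul_prod_erase t _ hxt, hleaf]

end Graft

theorem gwProb_graft_general (p : ℕ → ℝ)
    (hp0 : 0 < p 0)
    (t s : Finset (List ℕ)) (ht : IsTree t) (hs : IsTree s)
    (x : List ℕ) (hxt : x ∈ t) (hleaf : outDeg t x = 0) :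
    gwProb p (graft t s x) = (1 / p 0) * gwProb p t * gwProb p s := by
  rw [mul_assoc, ← mul_gwProb_graft p ht hs.1 hxt hleaf, one_div, inv_mul_cancel_left₀ hp0.ne']

/-- For a critical Galton-Watson tree `τ` with offspring distribution `p`,
for any finite tree `t`, leaf `x` of `t`, and finite tree `s`,
`ℙ(τ = t ⊛ (s,x)) = (1/p 0)·ℙ(τ = t)·ℙ(τ = s)`. -/
theorem gwProb_graft (p : ℕ → ℝ) (hp : ∀ k, 0 ≤ p k) (hsum : ∑' k, p k = 1)
    (hp0 : 0 < p 0)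
    (hmeanS : Summable fun k : ℕ => (k : ℝ) * p k)
    (hcrit : ∑' k : ℕ, (k : ℝ) * p k = 1)
    (t s : Finset (List ℕ)) (ht : IsTree t) (hs : IsTree s)
    (x : List ℕ) (hxt : x ∈ t) (hleaf : outDeg t x = 0) :
    gwProb p (graft t s x) = (1 / p 0) * gwProb p t * gwProb p s :=
  gwProb_graft_general p hp0 t s ht hs x hxt hleaf
end

section
/- Let p be a critical unbounded pmf on ℕ, τ a Galton-Watson tree with offspring distribution p, and M(τ) its maximal out-degree. Then for every finite tree t, every leaf x of t, and every n > M(t) with p_n > 0: ℙ(τ ∈ T(t,x) | M(τ) = n) = (1/p_0)·ℙ(τ = t), where T(t,x) is the set of all trees obtained by grafting some tree on the leaf x of t. -/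
open MeasureTheory Finset

/-- Encoding of the Galton-Watson tree: `ω : List ℕ → ℕ` assigns a potential
out-degree to every Ulam–Harris word; `u` belongs to the tree iff each of its
coordinates is below the out-degree of the corresponding ancestor. -/
def memTree (ω : List ℕ → ℕ) (u : List ℕ) : Prop :=
  ∀ n < u.length, u.getD n 0 < ω (u.take n)

/-- The maximal out-degree `M(τ)` of the tree encoded by `ω`, in `ℕ∞`. -/
noncomputable def maxDeg (ω : List ℕ → ℕ) : ℕ∞ :=
  ⨆ (u : List ℕ) (_ : memTree ω u), (ω u : ℕ∞)

/-- The event `τ ∈ T(t,x)`: the Galton-Watson tree is obtained by grafting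
some tree on the leaf `x` of the finite tree `t`, i.e. the out-degree field
agrees with that of `t` at every vertex of `t` other than `x`. -/
def graftEvent (t : Finset (List ℕ)) (x : List ℕ) : Set (List ℕ → ℕ) :=
  {ω | ∀ u ∈ t, u ≠ x → ω u = outDeg t u}

/-!
On `τ ∈ T(t,x)` the out-degrees on `t \ {x}` are those of `t`, and `τ` is `t` with the subtree
`θ_x τ` of descendants of `x` grafted at `x`. As `n > M(t)`, on this event `M(τ) = n` iff
`M(θ_x τ) = n`. The field `θ_x ω` reads coordinates disjoint from `t \ {x}`, so it is independent
of them and has the law of `ω`; hence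
`ℙ(τ ∈ T(t,x), M(τ) = n) = ∏_{u ∈ t \ {x}} p(k_u(t)) · ℙ(M(τ) = n)`,
which is `p₀⁻¹ ℙ(τ = t) ℙ(M(τ) = n)` because `k_x(t) = 0`. Finally `ℙ(M(τ) = n) > 0` (it
contains the star with `n` leaves), and `p₀ > 0` since a critical law charging some `m ≥ 2` must
charge `0`.
-/

lemma zero_lt_apply_zero_of_tsum_mul_eq_one {p : ℕ → ℝ} (hp : ∀ k, 0 ≤ p k)
    (hsum : ∑' k, p k = 1) (hmeanS : Summable fun k : ℕ => (k : ℝ) * p k)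
    (hcrit : ∑' k : ℕ, (k : ℝ) * p k = 1) {m : ℕ} (hm : 2 ≤ m) (hpm : 0 < p m) : 0 < p 0 := by
  have hpS : Summable p := by
    by_contra h
    rw [tsum_eq_zero_of_not_summable h] at hsum
    exact zero_ne_one hsum
  -- `∑ (k - 1) p k = 0`, and if `p 0 = 0` every term is nonnegative while the `m`-th is positive
  by_contra! h0
  have hp0 : p 0 = 0 := le_antisymm h0 (hp 0)
  have hterm_nonneg : ∀ k : ℕ, 0 ≤ (k : ℝ) * p k - p k := fun k => by
    rcases k with _ | k
    · simp [hp0]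
    · push_cast
      nlinarith [hp (k + 1)]
  have htsum : ∑' k : ℕ, ((k : ℝ) * p k - p k) = 0 := by
    rw [hmeanS.tsum_sub hpS, hcrit, hsum, sub_self]
  have hterm_m := (hmeanS.sub hpS).le_tsum m fun k _ => hterm_nonneg k
  have hm' : (2 : ℝ) ≤ m := by exact_mod_cast hm
  rw [htsum] at hterm_m
  nlinarith

section PointCylinder

variable {ι β : Type*}

def pointCylinder (s : Finset ι) (f : ι → β) : Set (ι → β) :=
  {ω | ∀ u ∈ s, ω u = f u}

lemma pointCylinder_congr {s : Finset ι} {f g : ι → β} (h : ∀ u ∈ s, f u = g u) :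
    pointCylinder s f = pointCylinder s g := by
  ext ω
  exact forall₂_congr fun u hu => by rw [h u hu]

lemma pointCylinder_union [DecidableEq ι] (s s' : Finset ι) (f : ι → β) :
    pointCylinder (s ∪ s') f = pointCylinder s f ∩ pointCylinder s' f := by
  ext ω
  simp [pointCylinder, or_imp, forall_and]

lemma comp_preimage_pointCylinder {e : ι → ι} (he : e.Injective) (s : Finset ι) (h : ι → β) :
    (fun ω : ι → β => ω ∘ e) ⁻¹' pointCylinder s (h ∘ e) = pointCylinder (s.map ⟨e, he⟩) h := by
  ext ω
  simp [pointCylinder]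

lemma isPiSystem_pointCylinder :
    IsPiSystem {S : Set (ι → β) | ∃ s f, pointCylinder s f = S} := by
  classical
  rintro _ ⟨s, f, rfl⟩ _ ⟨s', f', rfl⟩ ⟨ω, hω, hω'⟩
  refine ⟨s ∪ s', ω, ?_⟩
  rw [pointCylinder_union, pointCylinder_congr fun u hu => (hω u hu).symm,
    pointCylinder_congr fun u hu => (hω' u hu).symm]

variable [MeasurableSpace β] [MeasurableSingletonClass β]

lemma measurableSet_pointCylinder (s : Finset ι) (f : ι → β) :
    MeasurableSet (pointCylinder s f) := by
  have : pointCylinder s f = ⋂ u ∈ (s : Set ι), (fun ω => ω u) ⁻¹' {f u} := by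
    ext ω
    simp [pointCylinder]
  rw [this]
  exact s.finite_toSet.measurableSet_biInter fun u _ =>
    measurable_pi_apply u (measurableSet_singleton (f u))

lemma generateFrom_pointCylinder [Countable β] :
    MeasurableSpace.generateFrom {S : Set (ι → β) | ∃ s f, pointCylinder s f = S} =
      MeasurableSpace.pi := by
  refine le_antisymm (MeasurableSpace.generateFrom_le ?_) (iSup_le fun u => ?_)
  · rintro _ ⟨s, f, rfl⟩
    exact measurableSet_pointCylinder s f
  · refine Measurable.comap_le (@measurable_to_countable' β (ι → β) _ _
      (MeasurableSpace.generateFrom _) _ fun b => ?_)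
    refine MeasurableSpace.measurableSet_generateFrom ⟨{u}, fun _ => b, ?_⟩
    ext ω
    simp [pointCylinder]

end PointCylinder

section Independence

variable {ι β : Type*} [MeasurableSpace β] [MeasurableSingletonClass β] [Countable β]
  {μ : Measure (ι → β)} [IsProbabilityMeasure μ] {q : β → ENNReal}

lemma measure_pointCylinder_inter_comp_preimage
    (hμ : ∀ s f, μ (pointCylinder s f) = ∏ u ∈ s, q (f u))
    {F : Finset ι} (c : ι → β) {e : ι → ι} (he : e.Injective) (hF : ∀ v, e v ∉ F)
    {C : Set (ι → β)} (hC : MeasurableSet C) :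
    μ (pointCylinder F c ∩ (fun ω => ω ∘ e) ⁻¹' C) = μ (pointCylinder F c) * μ C := by
  classical
  have hT : Measurable fun ω : ι → β => ω ∘ e :=
    measurable_pi_lambda _ fun v => measurable_pi_apply (e v)
  suffices (μ.restrict (pointCylinder F c)).map (fun ω => ω ∘ e) = μ (pointCylinder F c) • μ by
    simpa [Measure.map_apply hT hC, Measure.restrict_apply (hT hC), Set.inter_comm] using
      congrArg (· C) this
  refine ext_of_generate_finite _ generateFrom_pointCylinder.symm isPiSystem_pointCylinder
    ?_ (by simp [Measure.map_apply hT MeasurableSet.univ])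
  rintro _ ⟨s, g, rfl⟩
  -- `h` agrees with `g` along `e` and with `c` on `F`, which is disjoint from the range of `e`
  set h := Function.extend e g c
  have hF_eq : pointCylinder F c = pointCylinder F h := pointCylinder_congr fun u hu =>
    (Function.extend_apply' _ _ _ fun ⟨v, hv⟩ => hF v (hv ▸ hu)).symm
  have hdisj : Disjoint F (s.map ⟨e, he⟩) := Finset.disjoint_right.mpr fun w hw => by
    obtain ⟨v, -, rfl⟩ := Finset.mem_map.mp hw
    exact hF v
  rw [Measure.map_apply hT (measurableSet_pointCylinder _ _),
    Measure.restrict_apply (hT (measurableSet_pointCylinder _ _)),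
    ← Function.extend_comp he g c, comp_preimage_pointCylinder he, hF_eq,
    Set.inter_comm, ← pointCylinder_union, Measure.smul_apply, smul_eq_mul, hμ, hμ, hμ,
    Finset.prod_union hdisj, Finset.prod_map]
  rfl

end Independence

lemma card_image_range_concat (w : List ℕ) (n : ℕ) :
    ((Finset.range n).image fun j => w ++ [j]).card = n := by
  rw [Finset.card_image_of_injective _ fun a b hab => by simpa using hab, Finset.card_range]

namespace IsTree

variable {t : Finset (List ℕ)} {w x : List ℕ}

lemma mem_of_prefix (ht : IsTree t) {u v : List ℕ} (hu : u ∈ t) (hvu : v <+: u) : v ∈ t := by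
  induction u using List.reverseRecOn with
  | nil => rwa [List.prefix_nil.mp hvu]
  | append_singleton w a ih =>
    rcases List.prefix_concat_iff.mp hvu with rfl | hvw
    · exact hu
    · exact ih (ht.2 _ hu w a rfl).1 hvw

lemma concat_mem_iff (ht : IsTree t) {i : ℕ} :
    w ++ [i] ∈ t ↔ i < outDeg t w := by
  have mem_children : ∀ v, v ∈ t.filter (fun v => v ≠ [] ∧ v.dropLast = w) ↔
      v ∈ t ∧ ∃ j, v = w ++ [j] := fun v => by
    rw [Finset.mem_filter]
    refine and_congr_right fun _ => ⟨fun ⟨hv, hvw⟩ => ⟨v.getLast hv, ?_⟩, ?_⟩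
    · rw [← hvw, List.dropLast_append_getLast]
    · rintro ⟨j, rfl⟩
      simp
  constructor
  · intro hi
    -- the children `w ++ [j]`, `j ≤ i`, are all in `t`
    refine Nat.lt_of_succ_le ((card_image_range_concat w (i + 1)).symm.trans_le
      (Finset.card_le_card fun v hv => ?_))
    obtain ⟨j, hj, rfl⟩ := Finset.mem_image.mp hv
    refine (mem_children _).mpr ⟨?_, j, rfl⟩
    rcases (Nat.lt_succ_iff.mp (Finset.mem_range.mp hj)).lt_or_eq with hji | rfl
    · exact (ht.2 _ hi w i rfl).2 j hji
    · exact hi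
  · intro hi
    by_contra hni
    -- otherwise every child `w ++ [j]` has `j < i`
    refine hi.not_ge ((Finset.card_le_card fun v hv => ?_).trans
      (card_image_range_concat w i).le)
    obtain ⟨hvt, j, rfl⟩ := (mem_children v).mp hv
    refine Finset.mem_image.mpr ⟨j, Finset.mem_range.mpr ?_, rfl⟩
    by_contra! hij
    rcases hij.lt_or_eq with hij | rfl
    · exact hni ((ht.2 _ hvt w j rfl).2 i hij)
    · exact hni hvt

lemma append_notMem_of_outDeg_eq_zero (ht : IsTree t) (hleaf : outDeg t x = 0)
    {v : List ℕ} (hv : v ≠ []) : x ++ v ∉ t := by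
  intro hmem
  have hchild : x ++ [v.head hv] ∈ t := ht.mem_of_prefix hmem
    ⟨v.tail, by rw [List.append_assoc, List.singleton_append, List.cons_head_tail]⟩
  exact Nat.not_lt_zero _ (hleaf ▸ ht.concat_mem_iff.mp hchild)

end IsTree

section MemTree

variable {ω : List ℕ → ℕ} {u v : List ℕ}

lemma memTree_of_prefix (h : memTree ω u) (hvu : v <+: u) : memTree ω v := by
  obtain ⟨r, rfl⟩ := hvu
  intro k hk
  have h' := h k (by rw [List.length_append]; omega)
  rwa [List.getD_append _ _ _ _ hk, List.take_append_of_le_length hk.le] at h'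

lemma le_maxDeg (h : memTree ω u) : (ω u : ℕ∞) ≤ maxDeg ω :=
  le_iSup₂ (f := fun u (_ : memTree ω u) => (ω u : ℕ∞)) u h

variable {t : Finset (List ℕ)} {x : List ℕ}

lemma memTree_of_mem_graftEvent (ht : IsTree t) (hleaf : outDeg t x = 0)
    (hω : ω ∈ graftEvent t x) (hu : u ∈ t) : memTree ω u := by
  intro k hk
  have hprefix : u.take k ≠ x := by
    rintro rfl
    refine ht.append_notMem_of_outDeg_eq_zero hleaf (v := u.drop k) ?_ ?_
    · simpa [List.drop_eq_nil_iff] using hk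
    · rwa [List.take_append_drop]
  have hchild : u.take k ++ [u.getD k 0] ∈ t := by
    rw [List.getD_eq_getElem u 0 hk, ← List.concat_eq_append, List.take_concat_get]
    exact ht.mem_of_prefix hu (List.take_prefix _ u)
  rw [hω _ (ht.mem_of_prefix hu (List.take_prefix k u)) hprefix]
  exact ht.concat_mem_iff.mp hchild

lemma memTree_append_iff (ht : IsTree t) (hxt : x ∈ t) (hleaf : outDeg t x = 0)
    (hω : ω ∈ graftEvent t x) :
    memTree ω (x ++ v) ↔ memTree (ω ∘ (x ++ ·)) v := by
  constructor
  · intro h k hk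
    have h' := h (x.length + k) (by rw [List.length_append]; omega)
    rwa [List.getD_append_right _ _ _ _ (Nat.le_add_right _ _),
      Nat.add_sub_cancel_left, List.take_length_add_append] at h'
  · intro h k hk
    rw [List.length_append] at hk
    by_cases hkx : k < x.length
    · rw [List.getD_append _ _ _ _ hkx, List.take_append_of_le_length hkx.le]
      exact memTree_of_mem_graftEvent ht hleaf hω hxt k hkx
    · obtain ⟨j, rfl⟩ : ∃ j, k = x.length + j := ⟨k - x.length, by omega⟩
      rw [List.getD_append_right _ _ _ _ (Nat.le_add_right _ _),
        Nat.add_sub_cancel_left, List.take_length_add_append]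
      exact h j (by omega)

end MemTree

section Graft

variable {t : Finset (List ℕ)} {x : List ℕ} {ω : List ℕ → ℕ}

lemma graftEvent_eq_pointCylinder : graftEvent t x = pointCylinder (t.erase x) (outDeg t) := by
  ext ω
  simp only [graftEvent, pointCylinder, Finset.mem_erase, Set.mem_ofPred_eq, and_imp]
  exact forall_congr' fun _ => Imp.swap

lemma append_notMem_erase (ht : IsTree t) (hleaf : outDeg t x = 0) (v : List ℕ) :
    x ++ v ∉ t.erase x := fun hv => by
  rcases eq_or_ne v [] with rfl | hv0
  · simp at hv
  · exact ht.append_notMem_of_outDeg_eq_zero hleaf hv0 (Finset.mem_of_mem_erase hv)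

lemma mem_erase_or_prefix_of_memTree (ht : IsTree t) (hω : ω ∈ graftEvent t x) {u : List ℕ}
    (hu : memTree ω u) : u ∈ t.erase x ∨ x <+: u := by
  have of_mem : ∀ {u}, u ∈ t → u ∈ t.erase x ∨ x <+: u := fun {u} hu => by
    by_cases hux : u = x
    · exact .inr (hux ▸ List.prefix_refl u)
    · exact .inl (Finset.mem_erase.mpr ⟨hux, hu⟩)
  induction u using List.reverseRecOn with
  | nil => exact of_mem ht.1
  | append_singleton w a ih =>
    rcases ih (memTree_of_prefix hu (List.prefix_append w [a])) with hw | hxw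
    · obtain ⟨hwx, hwt⟩ := Finset.mem_erase.mp hw
      have ha := hu w.length (by simp)
      rw [List.getD_append_right _ _ _ _ le_rfl, Nat.sub_self, List.take_left,
        List.getD_cons_zero, hω w hwt hwx] at ha
      exact of_mem (ht.concat_mem_iff.mpr ha)
    · exact .inr (hxw.trans (List.prefix_append w [a]))

lemma maxDeg_eq_of_mem_graftEvent (ht : IsTree t) (hxt : x ∈ t)
    (hleaf : outDeg t x = 0) (hω : ω ∈ graftEvent t x) :
    maxDeg ω = (t.erase x).sup (fun u => (outDeg t u : ℕ∞)) ⊔ maxDeg (ω ∘ (x ++ ·)) := by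
  refine le_antisymm (iSup₂_le fun u hu => ?_) (sup_le (Finset.sup_le fun u hu => ?_) ?_)
  · rcases mem_erase_or_prefix_of_memTree ht hω hu with hu' | ⟨v, rfl⟩
    · obtain ⟨hux, hut⟩ := Finset.mem_erase.mp hu'
      rw [hω u hut hux]
      exact le_sup_of_le_left (Finset.le_sup (f := fun u => (outDeg t u : ℕ∞)) hu')
    · exact le_sup_of_le_right (le_maxDeg ((memTree_append_iff ht hxt hleaf hω).mp hu))
  · obtain ⟨hux, hut⟩ := Finset.mem_erase.mp hu
    rw [← hω u hut hux]
    exact le_maxDeg (memTree_of_mem_graftEvent ht hleaf hω hut)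
  · exact iSup₂_le fun v hv => le_maxDeg ((memTree_append_iff ht hxt hleaf hω).mpr hv)

lemma graftEvent_inter_maxDeg_eq (ht : IsTree t) (hxt : x ∈ t) (hleaf : outDeg t x = 0)
    {n : ℕ} (hn : t.sup (outDeg t) < n) :
    graftEvent t x ∩ {ω | maxDeg ω = n} =
      graftEvent t x ∩ (fun ω => ω ∘ (x ++ ·)) ⁻¹' {ω | maxDeg ω = n} := by
  ext ω
  refine and_congr_right fun hω => ?_
  have hlt : (t.erase x).sup (fun u => (outDeg t u : ℕ∞)) < n :=
    (Finset.sup_le fun u hu => Nat.cast_le.mpr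
      (Finset.le_sup (Finset.mem_of_mem_erase hu))).trans_lt (Nat.cast_lt.mpr hn)
  simp only [Set.mem_ofPred_eq, Set.mem_preimage, maxDeg_eq_of_mem_graftEvent ht hxt hleaf hω]
  rw [max_eq_iff]
  exact ⟨fun h => (h.resolve_left fun h' => hlt.ne h'.1).1, fun h => .inr ⟨h, h ▸ hlt.le⟩⟩

end Graft

section MaxDeg

lemma measurableSet_memTree (u : List ℕ) : MeasurableSet {ω : List ℕ → ℕ | memTree ω u} := by
  simp only [memTree, Set.ofPred_forall]
  exact .iInter fun k => .iInter fun _ =>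
    measurable_pi_apply _ (measurableSet_Ioi (a := u.getD k 0))

lemma measurable_maxDeg : Measurable maxDeg := by
  have hle : ∀ m : ℕ∞, MeasurableSet {ω | maxDeg ω ≤ m} := fun m => by
    simp only [maxDeg, iSup₂_le_iff, Set.ofPred_forall]
    refine .iInter fun u => (measurableSet_memTree u).imp ?_
    exact measurable_pi_apply (X := fun _ => ℕ) u
      (.of_discrete : MeasurableSet {k : ℕ | (k : ℕ∞) ≤ m})
  refine measurable_to_countable' fun m => ?_
  have hlevel : maxDeg ⁻¹' {m} = {ω | maxDeg ω ≤ m} ∩ ⋂ k < m, {ω | maxDeg ω ≤ k}ᶜ := by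
    ext ω
    simp only [Set.mem_preimage, Set.mem_singleton_iff, Set.mem_inter_iff, Set.mem_iInter,
      Set.mem_compl_iff, Set.mem_ofPred_eq, not_le]
    refine ⟨fun h => ⟨h.le, fun k hk => h ▸ hk⟩, fun ⟨h, hlt⟩ => ?_⟩
    exact h.antisymm (not_lt.mp fun h' => (hlt _ h').false)
  rw [hlevel]
  exact (hle m).inter (.iInter fun k => .iInter fun _ => (hle k).compl)

lemma maxDeg_eq_of_star {ω : List ℕ → ℕ} {n : ℕ} (hroot : ω [] = n)
    (hchildren : ∀ i < n, ω [i] = 0) : maxDeg ω = n := by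
  refine le_antisymm (iSup₂_le fun u hu => ?_) (hroot ▸ le_maxDeg fun k hk => by simp at hk)
  match u with
  | [] => rw [hroot]
  | [i] =>
    have hi : i < n := by simpa [hroot] using hu 0 (by simp)
    simp [hchildren i hi]
  | i :: j :: _ =>
    have hi : i < n := by simpa [hroot] using hu 0 (by simp)
    have hj := hu 1 (by simp)
    simp [hchildren i hi] at hj

lemma measure_maxDeg_eq_ne_zero {μ : Measure (List ℕ → ℕ)} {q : ℕ → ENNReal}
    (hμ : ∀ s f, μ (pointCylinder s f) = ∏ u ∈ s, q (f u)) {n : ℕ} (hq0 : q 0 ≠ 0)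
    (hqn : q n ≠ 0) : μ {ω | maxDeg ω = n} ≠ 0 := by
  set star := insert [] ((Finset.range n).image fun i => [i])
  set f : List ℕ → ℕ := fun u => if u = [] then n else 0
  have hsub : pointCylinder star f ⊆ {ω | maxDeg ω = n} := fun ω hω =>
    maxDeg_eq_of_star (hω [] (Finset.mem_insert_self _ _)) fun i hi =>
      hω [i] (Finset.mem_insert_of_mem (Finset.mem_image_of_mem _ (Finset.mem_range.mpr hi)))
  refine fun h => (Finset.prod_ne_zero_iff.mpr fun u _ => ?_) ((hμ star f).symm.trans
    (measure_mono_null hsub h))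
  by_cases hu : u = [] <;> simp [f, hu, hq0, hqn]

end MaxDeg

/-- For a critical unbounded offspring distribution `p`, a finite tree `t`, a
leaf `x` of `t` and `n > M(t)` with `p n > 0`:
`ℙ(τ ∈ T(t,x) | M(τ) = n) = (1/p 0)·ℙ(τ = t)`. -/
theorem conditioned_graft_probability (p : ℕ → ℝ) (hp : ∀ k, 0 ≤ p k)
    (hsum : ∑' k, p k = 1)
    (hmeanS : Summable fun k : ℕ => (k : ℝ) * p k)
    (hcrit : ∑' k : ℕ, (k : ℝ) * p k = 1)
    (hunb : {n : ℕ | 0 < p n}.Infinite)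
    (μ : Measure (List ℕ → ℕ)) [IsProbabilityMeasure μ]
    (hcyl : ∀ (s : Finset (List ℕ)) (f : List ℕ → ℕ),
      μ {ω | ∀ u ∈ s, ω u = f u} = ∏ u ∈ s, ENNReal.ofReal (p (f u)))
    (t : Finset (List ℕ)) (ht : IsTree t) (x : List ℕ) (hxt : x ∈ t)
    (hleaf : outDeg t x = 0) (n : ℕ) (hn : t.sup (outDeg t) < n)
    (hpn : 0 < p n) :
    μ (graftEvent t x ∩ {ω | maxDeg ω = (n : ℕ∞)}) /
        μ {ω | maxDeg ω = (n : ℕ∞)} =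
      ENNReal.ofReal ((1 / p 0) * ∏ u ∈ t, p (outDeg t u)) := by
  obtain ⟨m, hpm, hm⟩ := hunb.exists_gt 1
  have hp0 := zero_lt_apply_zero_of_tsum_mul_eq_one hp hsum hmeanS hcrit hm hpm
  have hμ : ∀ s f, μ (pointCylinder s f) = ∏ u ∈ s, ENNReal.ofReal (p (f u)) := hcyl
  have hB0 : μ {ω | maxDeg ω = n} ≠ 0 :=
    measure_maxDeg_eq_ne_zero (q := fun k => ENNReal.ofReal (p k)) hμ
      (ENNReal.ofReal_pos.mpr hp0).ne' (ENNReal.ofReal_pos.mpr hpn).ne'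
  have hB : MeasurableSet {ω : List ℕ → ℕ | maxDeg ω = n} :=
    measurable_maxDeg (measurableSet_singleton _)
  rw [graftEvent_inter_maxDeg_eq ht hxt hleaf hn, graftEvent_eq_pointCylinder,
    measure_pointCylinder_inter_comp_preimage (q := fun k => ENNReal.ofReal (p k)) hμ _
      (fun _ _ => List.append_cancel_left) (append_notMem_erase ht hleaf) hB,
    ENNReal.mul_div_cancel_right hB0 (measure_ne_top _ _), hμ,
    ← ENNReal.ofReal_prod_of_nonneg fun u _ => hp _, ← Finset.mul_prod_erase t _ hxt, hleaf,
    one_div, inv_mul_cancel_left₀ hp0.ne']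
end
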